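/- arXiv:1703.01507 — 2 statements merged into one kernel-verified Lean document; each statement's English description precedes it below -/
import Mathlib

section
/- Let δ ∈ (0, 1/2) and suppose (x_i)_{i∈I} in ℝⁿ and (x'_i)_{i∈I} in ℝ^{n'} satisfy the (δ, n, n')-pairwise JL condition. Let 𝔠'* be a partition of I into nonempty blocks that is k-means-stable for (x'_i). Suppose α ∈ [0, 1) is such that for every ordered pair of distinct blocks C_a, C_b of 𝔠'* and every i ∈ C_a we have ‖x'_i − μ_{x'}(C_a)‖ ≤ α·(1/2)‖μ_{x'}(C_a) − μ_{x'}(C_b)‖ (a relative gap of 1−α times the distance between the projected centres), let p > 0 bound the cluster spread of the original points (x_i) with respect to 𝔠'*, and assume δ/(1−δ) ≤ (1−α²)/((1+2p)+α²). Then 𝔠'* is k-means-stable for (x_i). -/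
open Finset

variable {I : Type*} [Fintype I] [DecidableEq I]

/-- Centroid of the points indexed by the finite set `C`. -/
noncomputable def centroid {E : Type*} [NormedAddCommGroup E] [NormedSpace ℝ E]
    (y : I → E) (C : Finset I) : E :=
  (C.card : ℝ)⁻¹ • ∑ i ∈ C, y i

/-- `k`-means cost `J((y_i), 𝔠) = Σ_i ‖y_i − μ_y(𝔠(i))‖²` of a partition, written
as a sum over the blocks. -/
noncomputable def kmeansCost {E : Type*} [NormedAddCommGroup E] [NormedSpace ℝ E]
    (y : I → E) (c : Finpartition (univ : Finset I)) : ℝ :=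
  ∑ C ∈ c.parts, ∑ i ∈ C, ‖y i - centroid y C‖ ^ 2

/-- Within-cluster variance `VAR((y_i), C)`. -/
noncomputable def clVar {E : Type*} [NormedAddCommGroup E] [NormedSpace ℝ E]
    (y : I → E) (C : Finset I) : ℝ :=
  (C.card : ℝ)⁻¹ * ∑ i ∈ C, ‖y i - centroid y C‖ ^ 2

/-- The `(δ, n, n')`-pairwise Johnson–Lindenstrauss condition. -/
def JLpair (n n' : ℕ) (δ : ℝ) {I : Type*} (x : I → EuclideanSpace ℝ (Fin n))
    (x' : I → EuclideanSpace ℝ (Fin n')) : Prop :=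
  ∀ i j : I, (1 - δ) * ‖x i - x j‖ ^ 2 ≤ (n : ℝ) / n' * ‖x' i - x' j‖ ^ 2 ∧
    (n : ℝ) / n' * ‖x' i - x' j‖ ^ 2 ≤ (1 + δ) * ‖x i - x j‖ ^ 2

/-- A partition of `I` into at most `k` (automatically nonempty) blocks is `k`-optimal
for the points `y` if it minimizes the k-means cost among all such partitions. -/
def kOptimal {E : Type*} [NormedAddCommGroup E] [NormedSpace ℝ E] (k : ℕ) (y : I → E)
    (c : Finpartition (univ : Finset I)) : Prop :=
  c.parts.card ≤ k ∧ ∀ d : Finpartition (univ : Finset I), d.parts.card ≤ k →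
    kmeansCost y c ≤ kmeansCost y d

/-- A partition is k-means-stable (a local minimum of the k-means algorithm) for points `y`
if every point is at least as close to its own block's centroid as to any other centroid. -/
def kmeansStable {E : Type*} [NormedAddCommGroup E] [NormedSpace ℝ E] (y : I → E)
    (c : Finpartition (univ : Finset I)) : Prop :=
  ∀ i : I, ∀ Ci ∈ c.parts, i ∈ Ci → ∀ C ∈ c.parts,
    ‖y i - centroid y Ci‖ ≤ ‖y i - centroid y C‖

/-- `p` bounds the cluster spread of `y` with respect to the partition `c`. -/
def spreadBound {E : Type*} [NormedAddCommGroup E] [NormedSpace ℝ E] (p : ℝ) (y : I → E)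
    (c : Finpartition (univ : Finset I)) : Prop :=
  ∀ C₁ ∈ c.parts, ∀ C₂ ∈ c.parts, C₁ ≠ C₂ →
    clVar y C₁ * ((C₁.card + C₂.card : ℝ) / C₂.card)
      + clVar y C₂ * ((C₁.card + C₂.card : ℝ) / C₁.card)
      ≤ p * ‖centroid y C₁ - centroid y C₂‖ ^ 2

/-! Rescaling the projected points by `√(n/n')` turns the JL condition into two-sided bounds
`(1-δ)‖x_i - x_j‖² ≤ ‖y_i - y_j‖² ≤ (1+δ)‖x_i - x_j‖²`. Summed over pairs of points, the
decomposition `∑_{j∈C} ‖z - y_j‖² = |C| (‖z - μ(C)‖² + VAR(C))` carries these bounds over to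
point–centroid distances, centroid distances and variances.

In the rescaled projected space, with `d` the distance of the centroids of `C_a ∋ i` and `C_b`,
the gap gives `‖y_i - μ_b‖ ≥ (1 - α/2) d` and, together with the spread bound transferred from the
original space, `VAR(C_a) + VAR(C_b) ≤ (1+2p) d²/4`. The condition on `δ`, which is equivalent to
`2δ(1+p) ≤ 1 - α²`, then yields the margin
`(1+δ)‖y_i - μ_a‖² + 2δ(VAR(C_a) + VAR(C_b)) ≤ (1-δ)‖y_i - μ_b‖²`, and exactly this margin
survives the transfer back to `‖x_i - μ_a‖ ≤ ‖x_i - μ_b‖`. -/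

section Centroid

variable {ι E F : Type*} [NormedAddCommGroup E] [InnerProductSpace ℝ E]
  [NormedAddCommGroup F] [InnerProductSpace ℝ F] {C C₁ C₂ : Finset ι}

theorem card_smul_centroid (y : ι → E) (hC : C.Nonempty) :
    (C.card : ℝ) • centroid y C = ∑ i ∈ C, y i := by
  rw [_root_.centroid, smul_smul, mul_inv_cancel₀ (by exact_mod_cast hC.card_pos.ne'), one_smul]

theorem sum_sub_centroid (y : ι → E) (hC : C.Nonempty) :
    ∑ j ∈ C, (y j - centroid y C) = 0 := by
  rw [sum_sub_distrib, sum_const, ← Nat.cast_smul_eq_nsmul ℝ, card_smul_centroid y hC, sub_self]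

theorem centroid_singleton (y : ι → E) (i : ι) : centroid y {i} = y i := by
  simp [_root_.centroid]

theorem clVar_singleton (y : ι → E) (i : ι) : clVar y {i} = 0 := by
  simp [clVar, _root_.centroid_singleton]

theorem clVar_nonneg (y : ι → E) (C : Finset ι) : 0 ≤ clVar y C := by
  unfold clVar; positivity

theorem centroid_smul (a : ℝ) (y : ι → E) (C : Finset ι) :
    centroid (a • y) C = a • centroid y C := by
  simp only [_root_.centroid, Pi.smul_apply, ← smul_sum, smul_comm a]

theorem clVar_le_sq (y : ι → E) {r : ℝ} (h : ∀ j ∈ C, ‖y j - centroid y C‖ ≤ r) :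
    clVar y C ≤ r ^ 2 := by
  rcases C.eq_empty_or_nonempty with rfl | hC
  · simpa [clVar] using sq_nonneg r
  have hsum : ∑ j ∈ C, ‖y j - centroid y C‖ ^ 2 ≤ C.card * r ^ 2 := by
    simpa using sum_le_sum fun j hj => pow_le_pow_left₀ (norm_nonneg _) (h j hj) 2
  rw [clVar, inv_mul_le_iff₀ (by exact_mod_cast hC.card_pos)]
  exact hsum

theorem sum_norm_sub_sq (y : ι → E) (hC : C.Nonempty) (z : E) :
    ∑ j ∈ C, ‖z - y j‖ ^ 2 = C.card * (‖z - centroid y C‖ ^ 2 + clVar y C) := by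
  have hsplit : ∀ j ∈ C, ‖z - y j‖ ^ 2 = ‖z - centroid y C‖ ^ 2
      - 2 * inner ℝ (z - centroid y C) (y j - centroid y C) + ‖y j - centroid y C‖ ^ 2 := by
    intro j _
    rw [← norm_sub_sq_real, sub_sub_sub_cancel_right]
  rw [sum_congr rfl hsplit, sum_add_distrib, sum_sub_distrib, sum_const, ← mul_sum,
    ← inner_sum, sum_sub_centroid y hC, inner_zero_right, nsmul_eq_mul, clVar, mul_add,
    mul_inv_cancel_left₀ (by exact_mod_cast hC.card_pos.ne')]
  ring

theorem sum_sum_norm_sub_sq (y : ι → E) (h₁ : C₁.Nonempty) (h₂ : C₂.Nonempty) :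
    ∑ j ∈ C₁, ∑ k ∈ C₂, ‖y j - y k‖ ^ 2 = C₁.card * C₂.card *
      (‖centroid y C₁ - centroid y C₂‖ ^ 2 + clVar y C₁ + clVar y C₂) := by
  rw [sum_congr rfl fun j _ => sum_norm_sub_sq y h₂ (y j), ← mul_sum, sum_add_distrib,
    sum_const, nsmul_eq_mul]
  simp_rw [norm_sub_rev (y _) (centroid y C₂)]
  rw [sum_norm_sub_sq y h₁, norm_sub_rev (centroid y C₂)]
  ring

theorem mul_sq_centroid_add_clVar_le {x : ι → E} {y : ι → F} {a b : ℝ}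
    (h : ∀ i j, a * ‖x i - x j‖ ^ 2 ≤ b * ‖y i - y j‖ ^ 2)
    (h₁ : C₁.Nonempty) (h₂ : C₂.Nonempty) :
    a * (‖centroid x C₁ - centroid x C₂‖ ^ 2 + clVar x C₁ + clVar x C₂) ≤
      b * (‖centroid y C₁ - centroid y C₂‖ ^ 2 + clVar y C₁ + clVar y C₂) := by
  have hsum := sum_le_sum fun j (_ : j ∈ C₁) => sum_le_sum fun k (_ : k ∈ C₂) => h j k
  simp_rw [← mul_sum] at hsum
  rw [sum_sum_norm_sub_sq x h₁ h₂, sum_sum_norm_sub_sq y h₁ h₂] at hsum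
  have hm : (0 : ℝ) < C₁.card * C₂.card := by
    have := h₁.card_pos; have := h₂.card_pos; positivity
  nlinarith

theorem mul_clVar_le {x : ι → E} {y : ι → F} {a b : ℝ}
    (h : ∀ i j, a * ‖x i - x j‖ ^ 2 ≤ b * ‖y i - y j‖ ^ 2) (hC : C.Nonempty) :
    a * clVar x C ≤ b * clVar y C := by
  have := mul_sq_centroid_add_clVar_le h hC hC
  simp only [sub_self, norm_zero] at this
  linarith

theorem mul_sq_sub_centroid_add_clVar_le {x : ι → E} {y : ι → F} {a b : ℝ}
    (h : ∀ i j, a * ‖x i - x j‖ ^ 2 ≤ b * ‖y i - y j‖ ^ 2) (hC : C.Nonempty) (i : ι) :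
    a * (‖x i - centroid x C‖ ^ 2 + clVar x C) ≤ b * (‖y i - centroid y C‖ ^ 2 + clVar y C) := by
  simpa [_root_.centroid_singleton, clVar_singleton] using
    mul_sq_centroid_add_clVar_le h (singleton_nonempty i) hC

theorem spreadBound.clVar_add_clVar_le [Fintype ι] [DecidableEq ι] {p : ℝ} {y : ι → E}
    {c : Finpartition (univ : Finset ι)} (h : spreadBound p y c) (ha : C₁ ∈ c.parts)
    (hb : C₂ ∈ c.parts) (hab : C₁ ≠ C₂) :
    clVar y C₁ + clVar y C₂ ≤ p * ‖centroid y C₁ - centroid y C₂‖ ^ 2 := by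
  have hm₁ : (0 : ℝ) < C₁.card := by exact_mod_cast (c.nonempty_of_mem_parts ha).card_pos
  have hm₂ : (0 : ℝ) < C₂.card := by exact_mod_cast (c.nonempty_of_mem_parts hb).card_pos
  have hw₁ : 1 ≤ (C₁.card + C₂.card : ℝ) / C₂.card := by rw [le_div_iff₀ hm₂]; linarith
  have hw₂ : 1 ≤ (C₁.card + C₂.card : ℝ) / C₁.card := by rw [le_div_iff₀ hm₁]; linarith
  nlinarith [h C₁ ha C₂ hb hab, clVar_nonneg y C₁, clVar_nonneg y C₂]

end Centroid

theorem four_mul_le_of_le_of_mul_le {δ α p s e : ℝ} (hδ0 : 0 ≤ δ) (hp : 0 ≤ p) (he : 0 ≤ e)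
    (hcond : 2 * δ * (1 + p) ≤ 1 - α ^ 2)
    (hgap : s ≤ α ^ 2 * e / 2) (hspread : s * (1 - δ - 2 * p * δ) ≤ p * (1 + δ) * e) :
    4 * s ≤ (1 + 2 * p) * e := by
  -- The gap bound suffices when `α² ≤ 1/2 + p`; otherwise `p < 1/2` and the spread bound does.
  rcases le_or_gt (α ^ 2) (1 / 2 + p) with hα | hα
  · nlinarith
  · have ht : 0 < 1 - δ - 2 * p * δ := by nlinarith
    have hp2 : p < 1 / 2 := by nlinarith
    have hcoef : 4 * p * (1 + δ) ≤ (1 + 2 * p) * (1 - δ - 2 * p * δ) := by nlinarith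
    nlinarith [mul_le_mul_of_nonneg_right hcoef he]

theorem margin_of_gap {δ α p a b d s : ℝ} (hδ0 : 0 ≤ δ) (hδ1 : δ ≤ 1) (hp : 0 ≤ p)
    (hcond : 2 * δ * (1 + p) ≤ 1 - α ^ 2) (ha : 0 ≤ a) (hd0 : 0 ≤ d) (hd : d ≤ a + b)
    (hgap : a ≤ α * (1 / 2 * d)) (hs : 4 * s ≤ (1 + 2 * p) * d ^ 2) :
    (1 + δ) * a ^ 2 + 2 * δ * s ≤ (1 - δ) * b ^ 2 := by
  have hα : α ≤ 1 := by nlinarith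
  have hda : 0 ≤ d - a := by nlinarith
  have hb : (d - a) ^ 2 ≤ b ^ 2 := pow_le_pow_left₀ hda (by linarith) 2
  have had : a * d ≤ α * d ^ 2 / 2 := by nlinarith
  have ha2 : a ^ 2 ≤ α ^ 2 * d ^ 2 / 4 := by nlinarith
  nlinarith [mul_le_mul_of_nonneg_left hb (by linarith : 0 ≤ 1 - δ),
    mul_le_mul_of_nonneg_left had (by linarith : 0 ≤ 1 - δ),
    mul_le_mul_of_nonneg_left ha2 hδ0, mul_le_mul_of_nonneg_left hs hδ0,
    mul_nonneg (mul_nonneg (by linarith : 0 ≤ 1 - δ) (sq_nonneg (1 - α))) (sq_nonneg d),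
    mul_le_mul_of_nonneg_right hcond (sq_nonneg d)]

section Distortion

variable {ι E F : Type*} [NormedAddCommGroup E] [InnerProductSpace ℝ E]
  [NormedAddCommGroup F] [InnerProductSpace ℝ F] {x : ι → E} {y : ι → F} {δ : ℝ}
  {Ca Cb : Finset ι}

theorem four_mul_clVar_add_clVar_le {α p : ℝ} (hδ0 : 0 ≤ δ) (hδ1 : δ ≤ 1) (hp : 0 ≤ p)
    (hlo : ∀ i j, (1 - δ) * ‖x i - x j‖ ^ 2 ≤ ‖y i - y j‖ ^ 2)
    (hup : ∀ i j, ‖y i - y j‖ ^ 2 ≤ (1 + δ) * ‖x i - x j‖ ^ 2)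
    (ha : Ca.Nonempty) (hb : Cb.Nonempty)
    (hsp : clVar x Ca + clVar x Cb ≤ p * ‖centroid x Ca - centroid x Cb‖ ^ 2)
    (hVa : clVar y Ca ≤ (α * (1 / 2 * ‖centroid y Ca - centroid y Cb‖)) ^ 2)
    (hVb : clVar y Cb ≤ (α * (1 / 2 * ‖centroid y Ca - centroid y Cb‖)) ^ 2)
    (hcond : 2 * δ * (1 + p) ≤ 1 - α ^ 2) :
    4 * (clVar y Ca + clVar y Cb) ≤ (1 + 2 * p) * ‖centroid y Ca - centroid y Cb‖ ^ 2 := by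
  have hlo' : ∀ i j, (1 - δ) * ‖x i - x j‖ ^ 2 ≤ 1 * ‖y i - y j‖ ^ 2 := by simpa using hlo
  have hup' : ∀ i j, 1 * ‖y i - y j‖ ^ 2 ≤ (1 + δ) * ‖x i - x j‖ ^ 2 := by simpa using hup
  have hcross := mul_sq_centroid_add_clVar_le hlo' ha hb
  have hVa' := mul_clVar_le hup' ha
  have hVb' := mul_clVar_le hup' hb
  refine four_mul_le_of_le_of_mul_le hδ0 hp (sq_nonneg _) hcond (by linarith) ?_
  nlinarith [mul_le_mul_of_nonneg_left hcross (by positivity : 0 ≤ p * (1 + δ)),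
    mul_le_mul_of_nonneg_left hsp (by nlinarith : 0 ≤ (1 - δ) * (1 + δ)),
    mul_le_mul_of_nonneg_left (add_le_add hVa' hVb') (by nlinarith : 0 ≤ (1 - δ) * (1 + p))]

theorem norm_sub_centroid_le_of_margin (hδ0 : 0 ≤ δ) (hδ1 : δ < 1)
    (hlo : ∀ i j, (1 - δ) * ‖x i - x j‖ ^ 2 ≤ ‖y i - y j‖ ^ 2)
    (hup : ∀ i j, ‖y i - y j‖ ^ 2 ≤ (1 + δ) * ‖x i - x j‖ ^ 2)
    (ha : Ca.Nonempty) (hb : Cb.Nonempty) (i : ι)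
    (hmargin : (1 + δ) * ‖y i - centroid y Ca‖ ^ 2 + 2 * δ * (clVar y Ca + clVar y Cb) ≤
      (1 - δ) * ‖y i - centroid y Cb‖ ^ 2) :
    ‖x i - centroid x Ca‖ ≤ ‖x i - centroid x Cb‖ := by
  have hlo' : ∀ i j, (1 - δ) * ‖x i - x j‖ ^ 2 ≤ 1 * ‖y i - y j‖ ^ 2 := by simpa using hlo
  have hup' : ∀ i j, 1 * ‖y i - y j‖ ^ 2 ≤ (1 + δ) * ‖x i - x j‖ ^ 2 := by simpa using hup
  have hKa := mul_sq_sub_centroid_add_clVar_le hlo' ha i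
  have hKb := mul_sq_sub_centroid_add_clVar_le hup' hb i
  have hVa := mul_clVar_le hup' ha
  have hVb := mul_clVar_le hlo' hb
  have hsq : (1 - δ ^ 2) * ‖x i - centroid x Ca‖ ^ 2 ≤ (1 - δ ^ 2) * ‖x i - centroid x Cb‖ ^ 2 := by
    nlinarith [mul_le_mul_of_nonneg_left hKa (by linarith : 0 ≤ 1 + δ),
      mul_le_mul_of_nonneg_left hKb (by linarith : 0 ≤ 1 - δ),
      mul_le_mul_of_nonneg_left hVa (by linarith : 0 ≤ 1 - δ),
      mul_le_mul_of_nonneg_left hVb (by linarith : 0 ≤ 1 + δ)]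
  have hδ2 : 0 < 1 - δ ^ 2 := by nlinarith
  exact (pow_le_pow_iff_left₀ (norm_nonneg _) (norm_nonneg _) two_ne_zero).1
    (le_of_mul_le_mul_left hsq hδ2)

end Distortion

theorem kmeansStable_of_sq_dist_distortion {ι E F : Type*} [Fintype ι] [DecidableEq ι]
    [NormedAddCommGroup E] [InnerProductSpace ℝ E] [NormedAddCommGroup F]
    [InnerProductSpace ℝ F] {x : ι → E} {y : ι → F} {δ α p : ℝ}
    (hδ0 : 0 ≤ δ) (hδ1 : δ < 1) (hp : 0 ≤ p)
    (hlo : ∀ i j, (1 - δ) * ‖x i - x j‖ ^ 2 ≤ ‖y i - y j‖ ^ 2)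
    (hup : ∀ i j, ‖y i - y j‖ ^ 2 ≤ (1 + δ) * ‖x i - x j‖ ^ 2)
    (c : Finpartition (univ : Finset ι))
    (hgap : ∀ Ca ∈ c.parts, ∀ Cb ∈ c.parts, Ca ≠ Cb → ∀ i ∈ Ca,
      ‖y i - centroid y Ca‖ ≤ α * (1 / 2 * ‖centroid y Ca - centroid y Cb‖))
    (hspread : spreadBound p x c) (hcond : 2 * δ * (1 + p) ≤ 1 - α ^ 2) :
    kmeansStable x c := by
  intro i Ca hCa hi Cb hCb
  rcases eq_or_ne Ca Cb with rfl | hab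
  · exact le_rfl
  have ha := c.nonempty_of_mem_parts hCa
  have hb := c.nonempty_of_mem_parts hCb
  have hVa : clVar y Ca ≤ (α * (1 / 2 * ‖centroid y Ca - centroid y Cb‖)) ^ 2 :=
    clVar_le_sq y (hgap Ca hCa Cb hCb hab)
  have hVb : clVar y Cb ≤ (α * (1 / 2 * ‖centroid y Ca - centroid y Cb‖)) ^ 2 := by
    rw [norm_sub_rev]
    exact clVar_le_sq y (hgap Cb hCb Ca hCa hab.symm)
  have hσ := four_mul_clVar_add_clVar_le hδ0 hδ1.le hp hlo hup ha hb
    (hspread.clVar_add_clVar_le hCa hCb hab) hVa hVb hcond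
  have htri : ‖centroid y Ca - centroid y Cb‖ ≤ ‖y i - centroid y Ca‖ + ‖y i - centroid y Cb‖ := by
    simpa only [dist_eq_norm] using dist_triangle_left (centroid y Ca) (centroid y Cb) (y i)
  exact norm_sub_centroid_le_of_margin hδ0 hδ1 hlo hup ha hb i <|
    margin_of_gap hδ0 hδ1.le hp hcond (norm_nonneg _) (norm_nonneg _) htri
      (hgap Ca hCa Cb hCb hab i hi) hσ

theorem local_min_inverted_general {n n' : ℕ}
    {δ : ℝ} (hδ0 : 0 < δ) (hδ : δ < 1 / 2)
    {I : Type*} [Fintype I] [DecidableEq I]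
    (x : I → EuclideanSpace ℝ (Fin n)) (x' : I → EuclideanSpace ℝ (Fin n'))
    (hJL : JLpair n n' δ x x')
    (cstar : Finpartition (univ : Finset I))
    (α : ℝ)
    (hgap : ∀ Ca ∈ cstar.parts, ∀ Cb ∈ cstar.parts, Ca ≠ Cb → ∀ i ∈ Ca,
      ‖x' i - centroid x' Ca‖ ≤ α * (1 / 2 * ‖centroid x' Ca - centroid x' Cb‖))
    (p : ℝ) (hp : 0 < p) (hspread : spreadBound p x cstar)
    (hδα : δ / (1 - δ) ≤ (1 - α ^ 2) / ((1 + 2 * p) + α ^ 2)) :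
    kmeansStable x cstar := by
  have hcond : 2 * δ * (1 + p) ≤ 1 - α ^ 2 := by
    rw [div_le_div_iff₀ (by linarith) (by positivity)] at hδα
    linarith
  set r := √((n : ℝ) / n')
  have hr0 : 0 ≤ r := Real.sqrt_nonneg _
  have hr : r ^ 2 = n / n' := Real.sq_sqrt (by positivity)
  have hsub : ∀ u v : EuclideanSpace ℝ (Fin n'), ‖r • u - r • v‖ = r * ‖u - v‖ := fun u v => by
    rw [← smul_sub, norm_smul, Real.norm_of_nonneg hr0]
  refine kmeansStable_of_sq_dist_distortion (y := r • x') hδ0.le (by linarith) hp.le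
    (fun i j => ?_) (fun i j => ?_) cstar (fun Ca hCa Cb hCb hab i hi => ?_) hspread hcond
  · simpa [hsub, mul_pow, hr] using (hJL i j).1
  · simpa [hsub, mul_pow, hr] using (hJL i j).2
  · have := mul_le_mul_of_nonneg_left (hgap Ca hCa Cb hCb hab i hi) hr0
    simp only [Pi.smul_apply, centroid_smul, hsub]
    linarith

/-- A k-means local minimum in the projected space remains a local minimum in the original
space, provided there is a relative gap `1−α` between any two clusters in the projected
space, the cluster spread of the original points is bounded by `p`, and
`δ/(1−δ) ≤ (1−α²)/((1+2p)+α²)`. -/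
theorem local_min_inverted {n n' : ℕ} (hn'0 : 0 < n') (hn'n : n' < n)
    {δ : ℝ} (hδ0 : 0 < δ) (hδ : δ < 1 / 2)
    {I : Type*} [Fintype I] [DecidableEq I]
    (x : I → EuclideanSpace ℝ (Fin n)) (x' : I → EuclideanSpace ℝ (Fin n'))
    (hJL : JLpair n n' δ x x')
    (cstar : Finpartition (univ : Finset I)) (hstable : kmeansStable x' cstar)
    (α : ℝ) (hα0 : 0 ≤ α) (hα1 : α < 1)
    (hgap : ∀ Ca ∈ cstar.parts, ∀ Cb ∈ cstar.parts, Ca ≠ Cb → ∀ i ∈ Ca,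
      ‖x' i - centroid x' Ca‖ ≤ α * (1 / 2 * ‖centroid x' Ca - centroid x' Cb‖))
    (p : ℝ) (hp : 0 < p) (hspread : spreadBound p x cstar)
    (hδα : δ / (1 - δ) ≤ (1 - α ^ 2) / ((1 + 2 * p) + α ^ 2)) :
    kmeansStable x cstar :=
  local_min_inverted_general hδ0 hδ x x' hJL cstar α hgap p hp hspread hδα
end

section
/- Let δ ∈ (0, 1/2) and suppose (x_i)_{i∈I} in ℝⁿ and (x'_i)_{i∈I} in ℝ^{n'} satisfy the (δ, n, n')-pairwise JL condition. Let k ≥ 1, let 𝔠_G be a k-optimal partition for (x_i) and let 𝔠'_G be a k-optimal partition for (x'_i). Then (n/n')·J((x'_i), 𝔠'_G) ≤ (1+δ)·J((x_i), 𝔠_G), and also (n'/n)·J((x_i), 𝔠_G) ≤ (1−δ)^{-1}·J((x'_i), 𝔠'_G). In particular, an exact k-means optimizer in the projected space is a constant-factor approximation of the k-means optimum in the original space. -/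
/-!
For a fixed partition, the cost of a block `C` is `(2|C|)⁻¹ Σ_{i,j ∈ C} ‖y_i - y_j‖²`, so the
k-means cost depends only on pairwise squared distances. The JL condition therefore gives
`(1 - δ) J(x, 𝔠) ≤ (n/n') J(x', 𝔠) ≤ (1 + δ) J(x, 𝔠)` for every partition `𝔠`; evaluating this
at the optimal partition of the other point family and using optimality gives both bounds.
-/

open Finset

variable {I : Type*} [Fintype I] [DecidableEq I]

section KMeans

variable {ι E F : Type*} [NormedAddCommGroup E] [NormedAddCommGroup F]

lemma sum_sub_centroid_eq_zero [NormedSpace ℝ E] (y : ι → E) {C : Finset ι} (hC : C.Nonempty) :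
    ∑ i ∈ C, (y i - centroid y C) = 0 := by
  have hcard : (#C : ℝ) ≠ 0 := Nat.cast_ne_zero.mpr hC.card_ne_zero
  rw [sum_sub_distrib, sum_const, _root_.centroid, ← Nat.cast_smul_eq_nsmul ℝ,
    smul_inv_smul₀ hcard, sub_self]

lemma sum_sum_norm_sub_sq_eq [InnerProductSpace ℝ E] (y : ι → E) (C : Finset ι) :
    ∑ i ∈ C, ∑ j ∈ C, ‖y i - y j‖ ^ 2 = 2 * #C * ∑ i ∈ C, ‖y i - centroid y C‖ ^ 2 := by
  rcases C.eq_empty_or_nonempty with rfl | hC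
  · simp
  have hsum := sum_sub_centroid_eq_zero y hC
  set μ := centroid y C
  have hexpand : ∀ i j, ‖y i - y j‖ ^ 2
      = ‖y i - μ‖ ^ 2 + ‖y j - μ‖ ^ 2 - 2 * inner ℝ (y i - μ) (y j - μ) := by
    intro i j
    rw [← sub_sub_sub_cancel_right (y i) (y j) μ, norm_sub_sq_real]
    ring
  have hcross : ∑ i ∈ C, ∑ j ∈ C, inner ℝ (y i - μ) (y j - μ) = (0 : ℝ) := by
    simp_rw [← inner_sum, hsum, inner_zero_right, sum_const_zero]
  simp only [hexpand, sum_sub_distrib, sum_add_distrib, sum_const, ← mul_sum, nsmul_eq_mul,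
    hcross]
  ring

lemma kmeansCost_nonneg [NormedSpace ℝ E] (y : I → E) (c : Finpartition (univ : Finset I)) :
    0 ≤ kmeansCost y c :=
  sum_nonneg fun _ _ => sum_nonneg fun _ _ => sq_nonneg _

variable [InnerProductSpace ℝ E] [InnerProductSpace ℝ F] {a b : ℝ}

lemma mul_sum_norm_sub_centroid_sq_le {x : ι → E} {y : ι → F}
    (h : ∀ i j, a * ‖x i - x j‖ ^ 2 ≤ b * ‖y i - y j‖ ^ 2) (C : Finset ι) :
    a * ∑ i ∈ C, ‖x i - centroid x C‖ ^ 2 ≤ b * ∑ i ∈ C, ‖y i - centroid y C‖ ^ 2 := by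
  rcases C.eq_empty_or_nonempty with rfl | hC
  · simp
  have hpos : (0 : ℝ) < 2 * #C := by have := hC.card_pos; positivity
  have hpairs : a * ∑ i ∈ C, ∑ j ∈ C, ‖x i - x j‖ ^ 2
      ≤ b * ∑ i ∈ C, ∑ j ∈ C, ‖y i - y j‖ ^ 2 := by
    simp only [mul_sum]
    exact sum_le_sum fun i _ => sum_le_sum fun j _ => h i j
  rw [sum_sum_norm_sub_sq_eq, sum_sum_norm_sub_sq_eq] at hpairs
  refine le_of_mul_le_mul_left ?_ hpos
  linarith

lemma mul_kmeansCost_le {x : I → E} {y : I → F}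
    (h : ∀ i j, a * ‖x i - x j‖ ^ 2 ≤ b * ‖y i - y j‖ ^ 2) (c : Finpartition (univ : Finset I)) :
    a * kmeansCost x c ≤ b * kmeansCost y c := by
  rw [kmeansCost, kmeansCost, mul_sum, mul_sum]
  exact sum_le_sum fun C _ => mul_sum_norm_sub_centroid_sq_le h C

end KMeans

theorem global_min_approx_general {n n' : ℕ}
    {δ : ℝ} (hδ : δ < 1 / 2)
    {I : Type*} [Fintype I] [DecidableEq I]
    (x : I → EuclideanSpace ℝ (Fin n)) (x' : I → EuclideanSpace ℝ (Fin n'))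
    (hJL : JLpair n n' δ x x') (k : ℕ)
    (cG c'G : Finpartition (univ : Finset I))
    (hcG : kOptimal k x cG) (hc'G : kOptimal k x' c'G) :
    (n : ℝ) / n' * kmeansCost x' c'G ≤ (1 + δ) * kmeansCost x cG ∧
    (n' : ℝ) / n * kmeansCost x cG ≤ (1 - δ)⁻¹ * kmeansCost x' c'G := by
  have hratio : (n' : ℝ) / n * (n / n') ≤ 1 := by
    rw [div_mul_div_comm, mul_comm (n' : ℝ)]
    exact div_self_le_one _
  constructor
  · calc (n : ℝ) / n' * kmeansCost x' c'G ≤ n / n' * kmeansCost x' cG := by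
          gcongr; exact hc'G.2 cG hcG.1
      _ ≤ (1 + δ) * kmeansCost x cG := mul_kmeansCost_le (fun i j => (hJL i j).2) cG
  · rw [le_inv_mul_iff₀ (by linarith)]
    calc (1 - δ) * (n' / n * kmeansCost x cG) = n' / n * ((1 - δ) * kmeansCost x cG) := by ring
      _ ≤ n' / n * ((1 - δ) * kmeansCost x c'G) := by
          gcongr
          · linarith
          · exact hcG.2 c'G hc'G.1
      _ ≤ n' / n * (n / n' * kmeansCost x' c'G) :=
          mul_le_mul_of_nonneg_left (mul_kmeansCost_le (fun i j => (hJL i j).1) c'G)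
            (by positivity)
      _ = n' / n * (n / n') * kmeansCost x' c'G := by ring
      _ ≤ kmeansCost x' c'G := mul_le_of_le_one_left (kmeansCost_nonneg x' c'G) hratio

/-- A perfect k-means optimizer in the projected space is a constant factor approximation
of the k-means optimum in the original space, and vice versa. -/
theorem global_min_approx {n n' : ℕ} (hn'0 : 0 < n') (hn'n : n' < n)
    {δ : ℝ} (hδ0 : 0 < δ) (hδ : δ < 1 / 2)
    {I : Type*} [Fintype I] [DecidableEq I]
    (x : I → EuclideanSpace ℝ (Fin n)) (x' : I → EuclideanSpace ℝ (Fin n'))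
    (hJL : JLpair n n' δ x x') (k : ℕ) (hk : 1 ≤ k)
    (cG c'G : Finpartition (univ : Finset I))
    (hcG : kOptimal k x cG) (hc'G : kOptimal k x' c'G) :
    (n : ℝ) / n' * kmeansCost x' c'G ≤ (1 + δ) * kmeansCost x cG ∧
    (n' : ℝ) / n * kmeansCost x cG ≤ (1 - δ)⁻¹ * kmeansCost x' c'G :=
  global_min_approx_general hδ x x' hJL k cG c'G hcG hc'G
end
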